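/- arXiv:1408.5270 — 5 statements merged into one kernel-verified Lean document; each statement's English description precedes it below -/
import Mathlib

section
/- Let (Ω, F, P) be a probability space with a finite filtration F₀ ⊆ F₁ ⊆ ... ⊆ F_T ⊆ F. Let N denote the space of adapted processes x = (x_t)_{t=0}^T with x_t measurable with respect to F_t and values in ℝ^{n_t}, and let N^∞ be its bounded elements. Let N^⊥ = {v ∈ L¹ : E[x·v] = 0 for all x ∈ N^∞}. If x ∈ N, v ∈ N^⊥, and (x·v)⁺ ∈ L¹ (where x·v = Σ_t x_t·v_t), then x·v ∈ L¹ and E[x·v] = 0. -/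
/-!
Write `x·v = ∑ₜ pₜ` with `pₜ = xₜ·vₜ`. On the `𝔽ₜ`-event `{‖xₜ‖ ≤ k}` the factor `xₜ` is bounded,
so testing `v ∈ N^⊥` against bounded processes supported at time `t` shows that `pₜ` is integrable
and orthogonal to `𝔽ₜ`-events there: `pₜ` has vanishing generalized conditional expectation
given `𝔽ₜ`. Peel off the terms from the earliest time on, by induction over events `A` of the
current time: on `A ∩ {‖xₜ‖ ≤ k}` the first term is integrable, hence so is the positive part of
the remaining sum, and the induction hypothesis makes the whole sum integrable with zero integral
there. As `k → ∞`, the integrable positive part bounds `∫ |·| = 2 ∫ (·)⁺` uniformly, giving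
integrability on `A` and, by dominated convergence, zero integral.
-/

open MeasureTheory Filter

section Exhaustion

variable {α ι : Type*} [MeasurableSpace α] {μ : Measure α} {l : Filter ι}
  [l.NeBot] [l.IsCountablyGenerated]

/-- On each piece `∫ |f| = 2 ∫ f⁺ - ∫ f = 2 ∫ f⁺`, so the pieces bound `∫ |f|` uniformly. -/
theorem MeasureTheory.AECover.integrable_and_integral_eq_zero_of_setIntegral_eq_zero
    {φ : ι → Set α} (hφ : AECover μ l φ) {f : α → ℝ} (hfi : ∀ i, IntegrableOn f (φ i) μ)
    (hf0 : ∀ i, ∫ x in φ i, f x ∂μ = 0) (hpos : Integrable (fun x => max (f x) 0) μ) :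
    Integrable f μ ∧ ∫ x, f x ∂μ = 0 := by
  have habs : ∀ a : ℝ, |a| = 2 * max a 0 - a := fun a => by
    rcases abs_cases a with h | h <;> rcases max_cases a 0 with h' | h' <;> linarith
  have hint : Integrable f μ := by
    refine hφ.integrable_of_integral_norm_bounded (2 * ∫ x, max (f x) 0 ∂μ) hfi
      (Eventually.of_forall fun i => ?_)
    have hposi : IntegrableOn (fun x => max (f x) 0) (φ i) μ := (hfi i).pos_part
    calc ∫ x in φ i, ‖f x‖ ∂μ = 2 * ∫ x in φ i, max (f x) 0 ∂μ := by
          simp only [Real.norm_eq_abs, habs]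
          rw [integral_sub (hposi.const_mul 2) (hfi i), integral_const_mul, hf0, sub_zero]
      _ ≤ 2 * ∫ x, max (f x) 0 ∂μ := mul_le_mul_of_nonneg_left
          (setIntegral_le_integral hpos (ae_of_all _ fun x => le_max_right _ _)) zero_le_two
  exact ⟨hint, hφ.integral_eq_of_tendsto 0 hint (by simp only [hf0]; exact tendsto_const_nhds)⟩

end Exhaustion

/-- A generalized form of `E[f | m] = 0` for `f` that need not be integrable. -/
def IsLocallyCondCentered {Ω : Type*} (m : MeasurableSpace Ω) {m₀ : MeasurableSpace Ω}
    (μ : Measure[m₀] Ω) (f : Ω → ℝ) : Prop :=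
  ∃ D : ℕ → Set Ω, AECover μ atTop D ∧ ∀ k, MeasurableSet[m] (D k) ∧ IntegrableOn f (D k) μ ∧
    ∀ A, MeasurableSet[m] A → ∫ ω in D k ∩ A, f ω ∂μ = 0

theorem IsLocallyCondCentered.aestronglyMeasurable {Ω : Type*} {m m₀ : MeasurableSpace Ω}
    {μ : Measure[m₀] Ω} {f : Ω → ℝ} (hf : IsLocallyCondCentered m μ f) :
    AEStronglyMeasurable f μ :=
  let ⟨_, hD, hDk⟩ := hf
  hD.aestronglyMeasurable fun k => (hDk k).2.1.aestronglyMeasurable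

section Induction

variable {Ω ι : Type*} [MeasurableSpace Ω] {μ : Measure Ω} [LinearOrder ι]
  {𝔽 : ι → MeasurableSpace Ω} {p : ι → Ω → ℝ}

theorem integrableOn_sum_and_setIntegral_sum_eq_zero [DecidableEq ι] (h𝔽 : Monotone 𝔽)
    (hcent : ∀ t, IsLocallyCondCentered (𝔽 t) μ (p t))
    (U : Finset ι) {A : Set Ω} (hA : ∀ s ∈ U, MeasurableSet[𝔽 s] A) (hAm : MeasurableSet A)
    (hpos : IntegrableOn (fun ω => max (∑ s ∈ U, p s ω) 0) A μ) :
    IntegrableOn (fun ω => ∑ s ∈ U, p s ω) A μ ∧ ∫ ω in A, ∑ s ∈ U, p s ω ∂μ = 0 := by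
  induction U using Finset.induction_on_min generalizing A with
  | empty => simp
  | insert a U haU ih =>
    have ha : a ∉ U := fun h => lt_irrefl a (haU a h)
    simp only [Finset.sum_insert ha] at hpos ⊢
    obtain ⟨D, hD, hDk⟩ := hcent a
    have hAa : MeasurableSet[𝔽 a] A := hA a (Finset.mem_insert_self a U)
    have hpa : ∀ k, IntegrableOn (p a) (D k ∩ A) μ := fun k =>
      (hDk k).2.1.mono_set Set.inter_subset_left
    have hrest : ∀ k, IntegrableOn (fun ω => ∑ s ∈ U, p s ω) (D k ∩ A) μ ∧
        ∫ ω in D k ∩ A, ∑ s ∈ U, p s ω ∂μ = 0 := by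
      intro k
      refine ih (fun s hs => (h𝔽 (haU s hs).le _ (hDk k).1).inter
        (hA s (Finset.mem_insert_of_mem hs))) ((hD.measurableSet k).inter hAm) ?_
      -- `(∑_U p)⁺ ≤ (p a + ∑_U p)⁺ + |p a|`
      have hp : ∀ t, AEStronglyMeasurable (p t) μ := fun t => (hcent t).aestronglyMeasurable
      refine ((hpos.mono_set Set.inter_subset_right).add (hpa k).abs).mono'
        (by fun_prop) (ae_of_all _ fun ω => ?_)
      rw [Real.norm_of_nonneg (le_max_right _ _), Pi.add_apply]
      exact max_le (by linarith [le_max_left (p a ω + ∑ s ∈ U, p s ω) 0, neg_abs_le (p a ω)])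
        (by positivity)
    have hrestrict : ∀ k, (μ.restrict A).restrict (D k) = μ.restrict (D k ∩ A) := fun k =>
      Measure.restrict_restrict (hD.measurableSet k)
    refine hD.restrict.integrable_and_integral_eq_zero_of_setIntegral_eq_zero
      (fun k => ?_) (fun k => ?_) hpos
    · rw [IntegrableOn, hrestrict]
      exact (hpa k).add (hrest k).1
    · rw [hrestrict, integral_add (hpa k) (hrest k).1, (hDk k).2.2 A hAa, (hrest k).2, add_zero]

end Induction

theorem aecover_norm_le {Ω E : Type*} [MeasurableSpace Ω] {μ : Measure Ω} [NormedAddCommGroup E]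
    [MeasurableSpace E] [OpensMeasurableSpace E] {g : Ω → E} (hg : Measurable g) :
    AECover μ atTop fun k : ℕ => {ω | ‖g ω‖ ≤ k} where
  ae_eventually_mem := ae_of_all _ fun ω =>
    (tendsto_natCast_atTop_atTop.eventually_ge_atTop ‖g ω‖ : ∀ᶠ k : ℕ in atTop, ‖g ω‖ ≤ k)
  measurableSet _ := measurableSet_le hg.norm measurable_const

theorem isLocallyCondCentered_sum_mul {Ω : Type*} {m m₀ : MeasurableSpace Ω}
    {μ : Measure[m₀] Ω} (hm : m ≤ m₀) {d : ℕ} {g w : Ω → Fin d → ℝ} (hg : Measurable[m] g)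
    (hw : Integrable w μ)
    (hperp : ∀ y : Ω → Fin d → ℝ, Measurable[m] y → (∃ C : ℝ, ∀ ω i, |y ω i| ≤ C) →
      ∫ ω, ∑ i, y ω i * w ω i ∂μ = 0) :
    IsLocallyCondCentered m μ fun ω => ∑ i, g ω i * w ω i := by
  have hDm : ∀ k : ℕ, MeasurableSet[m] {ω | ‖g ω‖ ≤ k} := fun k =>
    measurable_norm.comp hg measurableSet_Iic
  refine ⟨_, aecover_norm_le (hg.mono hm le_rfl), fun k => ⟨hDm k, ?_, fun A hA => ?_⟩⟩
  · refine integrable_finsetSum _ fun i _ => (hw.eval i).integrableOn.bdd_mul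
      ((measurable_pi_apply i).comp (hg.mono hm le_rfl)).aestronglyMeasurable (c := k)
      (ae_restrict_of_forall_mem (hm _ (hDm k)) fun ω hω => ?_)
    exact (norm_le_pi_norm (g ω) i).trans hω
  · have hB : MeasurableSet[m] ({ω | ‖g ω‖ ≤ k} ∩ A) := (hDm k).inter hA
    have hy := hperp (({ω | ‖g ω‖ ≤ k} ∩ A).indicator g) (hg.indicator hB) ⟨k, fun ω i => ?_⟩
    · rw [← integral_indicator (hm _ hB)]
      refine (integral_congr_ae (ae_of_all _ fun ω => ?_)).trans hy
      by_cases hω : ω ∈ {ω | ‖g ω‖ ≤ k} ∩ A <;> simp [hω]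
    · by_cases hω : ω ∈ {ω | ‖g ω‖ ≤ k} ∩ A
      · simpa [hω] using (norm_le_pi_norm (g ω) i).trans hω.1
      · simp [hω]

theorem integral_sum_mul_eq_zero_of_single {Ω ι : Type*} [MeasurableSpace Ω] {μ : Measure Ω}
    [Fintype ι] [DecidableEq ι] {n : ι → ℕ} {𝔽 : ι → MeasurableSpace Ω}
    {v : ∀ t, Ω → Fin (n t) → ℝ}
    (hperp : ∀ y : ∀ t, Ω → Fin (n t) → ℝ, (∀ t, Measurable[𝔽 t] (y t)) →
      (∀ t, ∃ C : ℝ, ∀ ω i, |y t ω i| ≤ C) → ∫ ω, ∑ t, ∑ i, y t ω i * v t ω i ∂μ = 0)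
    (t : ι) (y : Ω → Fin (n t) → ℝ) (hy : Measurable[𝔽 t] y)
    (hC : ∃ C : ℝ, ∀ ω i, |y ω i| ≤ C) :
    ∫ ω, ∑ i, y ω i * v t ω i ∂μ = 0 := by
  let z : ∀ s, Ω → Fin (n s) → ℝ := Pi.single t y
  have hz : ∀ s, Measurable[𝔽 s] (z s) ∧ ∃ C : ℝ, ∀ ω i, |z s ω i| ≤ C := by
    intro s
    by_cases hs : s = t
    · subst hs
      simpa [z] using ⟨hy, hC⟩
    · simpa [z, Pi.single_eq_of_ne hs] using ⟨measurable_const, 0, fun _ _ => le_rfl⟩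
  have hsum : ∀ ω, ∑ s, ∑ i, z s ω i * v s ω i = ∑ i, y ω i * v t ω i := fun ω => by
    rw [Fintype.sum_eq_single t fun s hs => by simp [z, Pi.single_eq_of_ne hs]]
    simp [z]
  simpa only [hsum] using hperp z (fun s => (hz s).1) fun s => (hz s).2

theorem integral_pairing_eq_zero_of_posPart_integrable_general
    {Ω : Type*} [MeasurableSpace Ω] (μ : Measure Ω)
    (T : ℕ) (n : Fin (T + 1) → ℕ)
    (𝔽 : Fin (T + 1) → MeasurableSpace Ω)
    (h𝔽le : ∀ t, 𝔽 t ≤ ‹MeasurableSpace Ω›)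
    (h𝔽mono : ∀ s t : Fin (T + 1), s ≤ t → 𝔽 s ≤ 𝔽 t)
    -- the process `x ∈ N` : adapted, not necessarily integrable
    (x : ∀ t : Fin (T + 1), Ω → Fin (n t) → ℝ)
    (hx : ∀ t, Measurable[𝔽 t] (x t))
    -- `v ∈ N^⊥` : integrable and annihilating every bounded adapted process
    (v : ∀ t : Fin (T + 1), Ω → Fin (n t) → ℝ)
    (hvint : ∀ t, Integrable (fun ω => v t ω) μ)
    (hperp : ∀ y : ∀ t : Fin (T + 1), Ω → Fin (n t) → ℝ,
      (∀ t, Measurable[𝔽 t] (y t)) → (∀ t, ∃ C : ℝ, ∀ ω, ∀ i, |y t ω i| ≤ C) →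
      ∫ ω, ∑ t : Fin (T + 1), ∑ i : Fin (n t), y t ω i * v t ω i ∂μ = 0)
    -- `(x·v)⁺ ∈ L¹`
    (hpos : Integrable
      (fun ω => max (∑ t : Fin (T + 1), ∑ i : Fin (n t), x t ω i * v t ω i) 0) μ) :
    Integrable (fun ω => ∑ t : Fin (T + 1), ∑ i : Fin (n t), x t ω i * v t ω i) μ ∧
      ∫ ω, ∑ t : Fin (T + 1), ∑ i : Fin (n t), x t ω i * v t ω i ∂μ = 0 := by
  have hcent : ∀ t, IsLocallyCondCentered (𝔽 t) μ fun ω => ∑ i, x t ω i * v t ω i := fun t =>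
    isLocallyCondCentered_sum_mul (h𝔽le t) (hx t) (hvint t)
      (integral_sum_mul_eq_zero_of_single hperp t)
  simpa using integrableOn_sum_and_setIntegral_sum_eq_zero (fun s t => h𝔽mono s t) hcent
    Finset.univ (fun _ _ => MeasurableSet.univ) MeasurableSet.univ hpos.integrableOn

/-- Let `N` be the space of adapted processes `(x_t)_{t=0}^T` with values in
`ℝ^{n_t}`, `N^∞` its bounded elements and `N^⊥` the annihilator of `N^∞` in `L¹`.
If `x ∈ N`, `v ∈ N^⊥` and `(x·v)⁺ ∈ L¹`, then `x·v ∈ L¹` and `E[x·v] = 0`. -/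
theorem integral_pairing_eq_zero_of_posPart_integrable
    {Ω : Type*} [MeasurableSpace Ω] (μ : Measure Ω) [IsProbabilityMeasure μ]
    (T : ℕ) (n : Fin (T + 1) → ℕ)
    (𝔽 : Fin (T + 1) → MeasurableSpace Ω)
    (h𝔽le : ∀ t, 𝔽 t ≤ ‹MeasurableSpace Ω›)
    (h𝔽mono : ∀ s t : Fin (T + 1), s ≤ t → 𝔽 s ≤ 𝔽 t)
    -- the process `x ∈ N` : adapted, not necessarily integrable
    (x : ∀ t : Fin (T + 1), Ω → Fin (n t) → ℝ)
    (hx : ∀ t, Measurable[𝔽 t] (x t))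
    -- `v ∈ N^⊥` : integrable and annihilating every bounded adapted process
    (v : ∀ t : Fin (T + 1), Ω → Fin (n t) → ℝ)
    (hvmeas : ∀ t, Measurable (v t))
    (hvint : ∀ t, Integrable (fun ω => v t ω) μ)
    (hperp : ∀ y : ∀ t : Fin (T + 1), Ω → Fin (n t) → ℝ,
      (∀ t, Measurable[𝔽 t] (y t)) → (∀ t, ∃ C : ℝ, ∀ ω, ∀ i, |y t ω i| ≤ C) →
      ∫ ω, ∑ t : Fin (T + 1), ∑ i : Fin (n t), y t ω i * v t ω i ∂μ = 0)
    -- `(x·v)⁺ ∈ L¹`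
    (hpos : Integrable
      (fun ω => max (∑ t : Fin (T + 1), ∑ i : Fin (n t), x t ω i * v t ω i) 0) μ) :
    Integrable (fun ω => ∑ t : Fin (T + 1), ∑ i : Fin (n t), x t ω i * v t ω i) μ ∧
      ∫ ω, ∑ t : Fin (T + 1), ∑ i : Fin (n t), x t ω i * v t ω i ∂μ = 0 :=
  integral_pairing_eq_zero_of_posPart_integrable_general μ T n 𝔽 h𝔽le h𝔽mono x hx v hvint hperp hpos
end

section
/- Let V : ℝ → (−∞,+∞] be a proper lsc convex function with conjugate V*. Fix ω and define f(x, u) = V(u − Σ_{t=0}^{T−1} x_t · Δs_{t+1}) + δ₀(x_T) on ℝⁿ × ℝ. Then the convex conjugate of f is f*(v, y) = V*(y) + Σ_{t=0}^{T−1} δ₀(y Δs_{t+1} + v_t). -/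
/-! On `x_T = 0` the substitution `w = u − Σ_t x_t · Δs_{t+1}` rewrites the pairing
`⟨x, v⟩ + u y` as `w y + Σ_{t<T} x_t · (y Δs_{t+1} + v_t)`. The supremum defining `f*` therefore
splits into `V*(y)` plus the supremum of a linear form in `(x_0, …, x_{T-1})`, which is `0` if the
form vanishes and `+∞` otherwise. Properness of `V` keeps every `EReal` sum away from `⊥ + ⊤`. -/

open scoped ENNReal

noncomputable section Stmt6

variable (T J : ℕ)

/-- `Σ_{t=0}^{T-1} x_t · Δs_{t+1}` for fixed vectors `s_t ∈ ℝ^J`. -/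
def gains (s : Fin (T + 1) → Fin J → ℝ) (x : Fin (T + 1) → Fin J → ℝ) : ℝ :=
  ∑ t : Fin T, ∑ j : Fin J, x t.castSucc j * (s t.succ j - s t.castSucc j)

/-- The integrand `f(x,u) = V(u − Σ x_t·Δs_{t+1}) + δ₀(x_T)` for `V : ℝ → (−∞,∞]`. -/
def fInt (s : Fin (T + 1) → Fin J → ℝ) (V : ℝ → EReal)
    (x : Fin (T + 1) → Fin J → ℝ) (u : ℝ) : EReal :=
  V (u - gains T J s x) + (if x (Fin.last T) = 0 then (0 : EReal) else ⊤)

/-- The convex conjugate of `f`. -/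
def fConj (s : Fin (T + 1) → Fin J → ℝ) (V : ℝ → EReal)
    (v : Fin (T + 1) → Fin J → ℝ) (y : ℝ) : EReal :=
  ⨆ (x : Fin (T + 1) → Fin J → ℝ) (u : ℝ),
    (((∑ t : Fin (T + 1), ∑ j : Fin J, x t j * v t j) + u * y : ℝ) : EReal) - fInt T J s V x u

/-- The convex conjugate of `V`. -/
def vConj (V : ℝ → EReal) (y : ℝ) : EReal :=
  ⨆ u : ℝ, ((u * y : ℝ) : EReal) - V u

theorem EReal.iSup_add {ι : Sort*} (g : ι → EReal) {a : EReal}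
    (h₁ : iSup g ≠ ⊤ ∨ a ≠ ⊥) (h₂ : iSup g ≠ ⊥ ∨ a ≠ ⊤) :
    (⨆ i, g i) + a = ⨆ i, (g i + a) :=
  Monotone.map_iSup_of_continuousAt (f := fun x => x + a)
    ((EReal.continuousAt_add (p := (iSup g, a)) h₁ h₂).comp (f := fun x => (x, a))
      (continuous_id.prodMk continuous_const).continuousAt)
    (fun _ _ h => add_le_add h le_rfl) (EReal.bot_add a)

theorem EReal.sum_ite_zero_top {ι : Type*} [Fintype ι] (p : ι → Prop) [DecidablePred p] :
    ∑ i, (if p i then (0 : EReal) else ⊤) = if ∀ i, p i then 0 else ⊤ := by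
  split_ifs with hp
  · exact Finset.sum_eq_zero fun i _ => if_pos (hp i)
  · obtain ⟨i, hpi⟩ := not_forall.mp hp
    refine top_unique ?_
    calc (⊤ : EReal) = if p i then 0 else ⊤ := (if_neg hpi).symm
      _ ≤ _ := Finset.single_le_sum (fun _ _ => ite_nonneg le_rfl le_top) (Finset.mem_univ i)

theorem iSup_coe_sum_sum_mul {ι κ : Type*} [Fintype ι] [Fintype κ] (c : ι → κ → ℝ) :
    ⨆ z : ι → κ → ℝ, ((∑ i, ∑ k, z i k * c i k : ℝ) : EReal) = if c = 0 then 0 else ⊤ := by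
  classical
  split_ifs with hc
  · subst hc; simp
  · obtain ⟨i, k, hik⟩ : ∃ i k, c i k ≠ 0 := by
      by_contra! h
      exact hc (funext fun i => funext (h i))
    refine EReal.eq_top_iff_forall_lt _ |>.mpr fun M => ?_
    let z : ι → κ → ℝ := Pi.single i (Pi.single k ((M + 1) / c i k))
    have hz : ∑ i, ∑ k, z i k * c i k = M + 1 := by
      simp [z, Pi.single_apply, ite_apply, ite_mul, hik]
    calc (M : EReal) < ((M + 1 : ℝ) : EReal) := by exact_mod_cast lt_add_one M
      _ ≤ _ := hz ▸ le_iSup (fun z : ι → κ → ℝ => ((∑ i, ∑ k, z i k * c i k : ℝ) : EReal)) z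

theorem Fin.iSup_last_eq_iSup_init {α β : Type*} [CompleteLattice β] {n : ℕ} (a : α)
    (F : (Fin n → α) → β) :
    ⨆ (x : Fin (n + 1) → α) (_ : x (Fin.last n) = a), F (Fin.init x) = ⨆ z, F z := by
  refine le_antisymm (iSup₂_le fun x _ => le_iSup F _) (iSup_le fun z => ?_)
  exact le_iSup₂_of_le (Fin.snoc z a) (Fin.snoc_last _ _) (by rw [Fin.init_snoc])

theorem vConj_ne_bot {V : ℝ → EReal} (hV : ∃ u, V u ≠ ⊤) (y : ℝ) : vConj V y ≠ ⊥ := by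
  obtain ⟨u, hu⟩ := hV
  refine ne_bot_of_le_ne_bot ?_ (le_iSup (fun u : ℝ => ((u * y : ℝ) : EReal) - V u) u)
  rw [sub_eq_add_neg]
  exact EReal.add_ne_bot_iff.mpr ⟨EReal.coe_ne_bot _, fun h => hu (EReal.neg_eq_bot_iff.mp h)⟩

def dualConstraint (s : Fin (T + 1) → Fin J → ℝ) (v : Fin (T + 1) → Fin J → ℝ) (y : ℝ) :
    Fin T → Fin J → ℝ :=
  fun t j => y * (s t.succ j - s t.castSucc j) + v t.castSucc j

theorem sum_mul_add_mul_eq_of_last_eq_zero (s v : Fin (T + 1) → Fin J → ℝ) (y : ℝ)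
    {x : Fin (T + 1) → Fin J → ℝ} (hx : x (Fin.last T) = 0) (u : ℝ) :
    ∑ t, ∑ j, x t j * v t j + u * y =
      ∑ t, ∑ j, Fin.init x t j * dualConstraint T J s v y t j + (u - gains T J s x) * y := by
  have hgains : ∑ t : Fin T, ∑ j, x t.castSucc j * (y * (s t.succ j - s t.castSucc j)) =
      y * gains T J s x := by
    simp only [gains, Finset.mul_sum, mul_left_comm y]
  simp [Fin.sum_univ_castSucc, hx, dualConstraint, Fin.init, mul_add, Finset.sum_add_distrib,
    hgains]
  ring

theorem iSup_sub_fInt_eq (s : Fin (T + 1) → Fin J → ℝ) {V : ℝ → EReal} (hV : ∀ u, V u ≠ ⊥)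
    (v : Fin (T + 1) → Fin J → ℝ) (y : ℝ) (x : Fin (T + 1) → Fin J → ℝ) :
    ⨆ u : ℝ, (((∑ t, ∑ j, x t j * v t j) + u * y : ℝ) : EReal) - fInt T J s V x u =
      ⨆ (_ : x (Fin.last T) = 0),
        ((∑ t, ∑ j, Fin.init x t j * dualConstraint T J s v y t j : ℝ) : EReal) + vConj V y := by
  by_cases hx : x (Fin.last T) = 0
  · rw [iSup_pos hx, add_comm (_ : EReal), vConj, EReal.iSup_add _ (Or.inr (EReal.coe_ne_bot _))
      (Or.inr (EReal.coe_ne_top _))]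
    refine (Equiv.subRight (gains T J s x)).iSup_congr fun u => ?_
    simp only [fInt, hx, if_true, add_zero, sum_mul_add_mul_eq_of_last_eq_zero T J s v y hx,
      EReal.coe_add, Equiv.subRight_apply]
    rw [add_sub_assoc, add_comm]
  · have hfInt (u : ℝ) : fInt T J s V x u = ⊤ := by
      rw [fInt, if_neg hx, EReal.add_top_of_ne_bot (hV _)]
    simp [hfInt, hx]

theorem fInt_conjugate_eq
    (s : Fin (T + 1) → Fin J → ℝ) (V : ℝ → EReal)
    (hproper : (∀ u, V u ≠ ⊥) ∧ ∃ u, V u ≠ ⊤)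
    (v : Fin (T + 1) → Fin J → ℝ) (y : ℝ) :
    fConj T J s V v y =
      vConj V y + ∑ t : Fin T,
        (if (fun j => y * (s t.succ j - s t.castSucc j) + v t.castSucc j) = (0 : Fin J → ℝ)
          then (0 : EReal) else ⊤) := by
  obtain ⟨hbot, hfinite⟩ := hproper
  calc fConj T J s V v y
      = ⨆ (x : Fin (T + 1) → Fin J → ℝ) (_ : x (Fin.last T) = 0),
          ((∑ t, ∑ j, Fin.init x t j * dualConstraint T J s v y t j : ℝ) : EReal) + vConj V y :=
        iSup_congr (iSup_sub_fInt_eq T J s hbot v y)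
    _ = ⨆ z : Fin T → Fin J → ℝ,
          ((∑ t, ∑ j, z t j * dualConstraint T J s v y t j : ℝ) : EReal) + vConj V y :=
        Fin.iSup_last_eq_iSup_init (0 : Fin J → ℝ) fun z =>
          ((∑ t, ∑ j, z t j * dualConstraint T J s v y t j : ℝ) : EReal) + vConj V y
    _ = (if dualConstraint T J s v y = 0 then 0 else ⊤) + vConj V y := by
        rw [← iSup_coe_sum_sum_mul, EReal.iSup_add _ (Or.inr (vConj_ne_bot hfinite y)) (Or.inl ?_)]
        exact ne_bot_of_le_ne_bot (EReal.coe_ne_bot _) (le_iSup_of_le 0 le_rfl)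
    _ = _ := by
        rw [add_comm, EReal.sum_ite_zero_top]
        simp only [dualConstraint, funext_iff, Pi.zero_apply]

end Stmt6
end

section
/- Let f : ℝⁿ × ℝᵐ → (−∞,+∞] be proper lsc convex and suppose f(x, u) ≥ x·v + λ[x·v]⁺ + β for all (x,u), where v ∈ ℝⁿ, λ > 0, β ∈ ℝ. Then the recession function satisfies f^∞(x, 0) ≥ x·v + λ[x·v]⁺ for all x ∈ ℝⁿ. Consequently, if f^∞(x,0) ≤ 0 then x·v ≤ 0, and if f^∞(x,0) − x·v ≤ 0 then [x·v]⁺ = 0. -/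
/-! The map `t ↦ t + λ t⁺` is positively homogeneous, so along the ray `x̄ + αx` the minorant
`h(y) = y·v + λ[y·v]⁺ + β` of `f` satisfies `α⁻¹ (h(x̄ + αx) − f(x̄, ū)) → x·v + λ[x·v]⁺` as
`α → ∞`. Each of these quotients is below the corresponding difference quotient of `f`, hence
below `f^∞(x, u)`, and so is their limit. -/

open scoped ENNReal

noncomputable section Stmt8

variable (n m : ℕ)

def dot {k : ℕ} (a b : Fin k → ℝ) : ℝ := ∑ i, a i * b i

/-- Recession function of `f` from a base point `(x̄, ū) ∈ dom f`. -/
def recFn (f : (Fin n → ℝ) → (Fin m → ℝ) → EReal)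
    (xb : Fin n → ℝ) (ub : Fin m → ℝ) (x : Fin n → ℝ) (u : Fin m → ℝ) : EReal :=
  ⨆ α : {a : ℝ // 0 < a},
    (((α.1)⁻¹ : ℝ) : EReal) * (f (xb + α.1 • x) (ub + α.1 • u) - f xb ub)

open Filter Topology

lemma dot_add_smul {k : ℕ} (xb x v : Fin k → ℝ) (α : ℝ) :
    dot (xb + α • x) v = dot xb v + α * dot x v := by
  simp only [dot, Pi.add_apply, Pi.smul_apply, smul_eq_mul, add_mul, Finset.sum_add_distrib,
    mul_assoc, Finset.mul_sum]

lemma tendsto_inv_mul_add_mul_max (a c lam K : ℝ) :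
    Tendsto (fun α : ℝ => α⁻¹ * (c + α * a + lam * max (c + α * a) 0 + K)) atTop
      (𝓝 (a + lam * max a 0)) := by
  have hcont : Tendsto (fun t : ℝ => a + lam * max (t * c + a) 0 + t * (c + K)) (𝓝 0)
      (𝓝 (a + lam * max a 0)) := by
    simpa using (show Continuous fun t : ℝ => a + lam * max (t * c + a) 0 + t * (c + K) by
      fun_prop).tendsto 0
  refine (hcont.comp tendsto_inv_atTop_zero).congr' ?_
  filter_upwards [eventually_gt_atTop 0] with α hα
  have hlin : α⁻¹ * (c + α * a) = α⁻¹ * c + a := by field_simp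
  have hmax : α⁻¹ * max (c + α * a) 0 = max (α⁻¹ * c + a) 0 := by
    rw [mul_max_of_nonneg _ _ (inv_nonneg.2 hα.le), hlin, mul_zero]
  simp only [Function.comp_apply]
  linear_combination -hlin - lam * hmax

lemma coe_le_iSup_of_tendsto {g : ℝ → ℝ} {L : ℝ} {s : {a : ℝ // 0 < a} → EReal}
    (hg : Tendsto g atTop (𝓝 L)) (hs : ∀ α, (g α.1 : EReal) ≤ s α) :
    (L : EReal) ≤ ⨆ α, s α :=
  le_of_tendsto (EReal.tendsto_coe.2 hg) <| (eventually_gt_atTop 0).mono fun α hα =>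
    (hs ⟨α, hα⟩).trans (le_iSup s _)

variable {n m} in
lemma coe_le_recFn_of_minorant {f : (Fin n → ℝ) → (Fin m → ℝ) → EReal}
    {φ : (Fin n → ℝ) → (Fin m → ℝ) → ℝ} (hφ : ∀ x u, (φ x u : EReal) ≤ f x u)
    {xb : Fin n → ℝ} {ub : Fin m → ℝ} {M : ℝ} (hM : f xb ub = M) {x : Fin n → ℝ}
    {u : Fin m → ℝ} {L : ℝ}
    (hL : Tendsto (fun α => α⁻¹ * (φ (xb + α • x) (ub + α • u) - M)) atTop (𝓝 L)) :
    (L : EReal) ≤ recFn n m f xb ub x u := by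
  refine coe_le_iSup_of_tendsto hL fun α => ?_
  rw [hM, EReal.coe_mul, EReal.coe_sub]
  exact mul_le_mul_of_nonneg_left (EReal.sub_le_sub (hφ _ _) le_rfl)
    (EReal.coe_nonneg.2 (inv_pos.2 α.2).le)

variable {n m} in
lemma dot_add_mul_max_le_recFn {f : (Fin n → ℝ) → (Fin m → ℝ) → EReal} {v : Fin n → ℝ}
    {lam β : ℝ} (hbound : ∀ x u, ((dot x v + lam * max (dot x v) 0 + β : ℝ) : EReal) ≤ f x u)
    {xb : Fin n → ℝ} {ub : Fin m → ℝ} (hdom : f xb ub ≠ ⊤) (x : Fin n → ℝ) (u : Fin m → ℝ) :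
    ((dot x v + lam * max (dot x v) 0 : ℝ) : EReal) ≤ recFn n m f xb ub x u := by
  have hM : f xb ub = (f xb ub).toReal :=
    (EReal.coe_toReal hdom ((EReal.bot_lt_coe _).trans_le (hbound xb ub)).ne').symm
  refine coe_le_recFn_of_minorant hbound hM ?_
  simp only [dot_add_smul]
  convert tendsto_inv_mul_add_mul_max (dot x v) (dot xb v) lam (β - (f xb ub).toReal) using 2
  ring

theorem recession_lower_bound
    (f : (Fin n → ℝ) → (Fin m → ℝ) → EReal)
    (v : Fin n → ℝ) (lam β : ℝ) (hlam : 0 < lam)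
    (hbound : ∀ x u, ((dot x v + lam * max (dot x v) 0 + β : ℝ) : EReal) ≤ f x u)
    (xb : Fin n → ℝ) (ub : Fin m → ℝ) (hdom : f xb ub ≠ ⊤) :
    (∀ x : Fin n → ℝ,
        ((dot x v + lam * max (dot x v) 0 : ℝ) : EReal) ≤ recFn n m f xb ub x 0) ∧
    (∀ x : Fin n → ℝ, recFn n m f xb ub x 0 ≤ 0 → dot x v ≤ 0) ∧
    (∀ x : Fin n → ℝ,
        recFn n m f xb ub x 0 - ((dot x v : ℝ) : EReal) ≤ 0 → max (dot x v) 0 = 0) := by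
  have key x := dot_add_mul_max_le_recFn hbound hdom x 0
  have hpos x : 0 ≤ lam * max (dot x v) 0 := mul_nonneg hlam.le (le_max_right _ _)
  refine ⟨key, fun x hx => ?_, fun x hx => ?_⟩
  · have : dot x v + lam * max (dot x v) 0 ≤ 0 := by exact_mod_cast (key x).trans hx
    linarith [hpos x]
  · have : dot x v + lam * max (dot x v) 0 ≤ dot x v := by
      exact_mod_cast (key x).trans (EReal.sub_nonpos.1 hx)
    exact le_antisymm (nonpos_of_mul_nonpos_right (by linarith) hlam) (le_max_right _ _)

end Stmt8
end

section
/- Let g : ℝᵐ → ℝ be a finite convex function and let (Eg)(u) := E[g(u(ω))] be finite for u in a decomposable space U ⊆ L⁰. Then the recession function of the convex function Eg on U satisfies (Eg)^∞(u) = E[g^∞(u)], where g^∞ is the pointwise recession function (by monotone convergence). -/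
/-! For convex `g` the difference quotient `(g (α • z) - g 0) / α` is nondecreasing in `α`, so both
sides are suprema along `α = n + 1` of nondecreasing sequences: of integrals on the left, pointwise
on the right. Writing the `n`-th quotient as the first one plus a nonnegative increment, monotone
convergence for the increments exchanges supremum and expectation; since the first quotient is
integrable, this also covers the case where both sides are `+∞`. -/

open MeasureTheory
open scoped ENNReal

noncomputable section Stmt9
open scoped Classical

/-- Positive part of an extended real, as an element of `ℝ≥0∞`. -/
def EReal.posPart (a : EReal) : ℝ≥0∞ :=
  if a = ⊤ then ⊤ else ENNReal.ofReal a.toReal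

/-- Expectation of an extended-real function: `+∞` unless the positive part is integrable. -/
def eexp {Ω : Type*} [MeasurableSpace Ω] (μ : Measure Ω) (φ : Ω → EReal) : EReal :=
  if (∫⁻ ω, (φ ω).posPart ∂μ) = ⊤ then ⊤
  else ((∫⁻ ω, (φ ω).posPart ∂μ : ℝ≥0∞) : EReal) - ((∫⁻ ω, (-(φ ω)).posPart ∂μ : ℝ≥0∞) : EReal)

/-- Pointwise recession function of a finite convex `g` (base point `0`). -/
def gRec {m : ℕ} (g : (Fin m → ℝ) → ℝ) (z : Fin m → ℝ) : EReal :=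
  ⨆ α : {a : ℝ // 0 < a}, (((g (α.1 • z) - g 0) / α.1 : ℝ) : EReal)

theorem EReal.posPart_coe (x : ℝ) : EReal.posPart x = ENNReal.ofReal x := by
  simp [EReal.posPart]

theorem EReal.coe_ennreal_le_posPart_coe_add (c : ℝ) (d : ℝ≥0∞) :
    d ≤ EReal.posPart (c + d) + ENNReal.ofReal (-c) := by
  induction d with
  | top => simp [EReal.posPart]
  | coe d =>
    rw [EReal.coe_nnreal_eq_coe_real, ← EReal.coe_add, EReal.posPart_coe]
    simpa using ENNReal.ofReal_add_le (p := c + d) (q := -c)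

theorem EReal.coe_add_iSup_coe_ennreal {ι : Sort*} [Nonempty ι] (c : ℝ) (y : ι → ℝ≥0∞) :
    ⨆ i, ((c : EReal) + y i) = c + ↑(⨆ i, y i) := by
  have hcont : Continuous fun x : ℝ≥0∞ => (c : EReal) + x := by
    refine continuous_iff_continuousAt.2 fun x =>
      ContinuousAt.comp (g := fun p : EReal × EReal => p.1 + p.2) ?_
        (continuous_const.prodMk continuous_coe_ennreal_ereal).continuousAt
    exact EReal.continuousAt_add (.inl (EReal.coe_ne_top c)) (.inl (EReal.coe_ne_bot c))
  have hmono : Monotone fun x : ℝ≥0∞ => (c : EReal) + x := fun x x' h =>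
    add_le_add le_rfl (EReal.coe_ennreal_le_coe_ennreal_iff.2 h)
  exact (hmono.map_ciSup_of_continuousAt hcont.continuousAt).symm

theorem EReal.iSup_coe_eq_add_iSup_ofReal_sub {ι : Sort*} [Nonempty ι] {x : ι → ℝ} {b : ℝ}
    (hb : ∀ i, b ≤ x i) : ⨆ i, (x i : EReal) = b + ↑(⨆ i, ENNReal.ofReal (x i - b)) := by
  rw [← EReal.coe_add_iSup_coe_ennreal]
  congr with i
  rw [EReal.coe_ennreal_ofReal, max_eq_left (_root_.sub_nonneg.2 (hb i)), ← EReal.coe_add,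
    add_sub_cancel]

theorem iSup_Ioi_eq_iSup_nat_succ {α : Type*} [CompleteLattice α] {s : ℝ → α}
    (hs : MonotoneOn s (Set.Ioi 0)) :
    ⨆ a : {a : ℝ // 0 < a}, s a = ⨆ n : ℕ, s (n + 1) := by
  refine le_antisymm (iSup_le fun a => ?_)
    (iSup_le fun n => le_iSup_of_le ⟨n + 1, by positivity⟩ le_rfl)
  obtain ⟨n, hn⟩ := exists_nat_ge a.1
  exact le_iSup_of_le n (hs a.2 (by simp only [Set.mem_Ioi]; positivity) (by linarith))

theorem ConvexOn.monotoneOn_slope_smul {E : Type*} [AddCommGroup E] [Module ℝ E] {g : E → ℝ}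
    (hg : ConvexOn ℝ Set.univ g) (z : E) :
    MonotoneOn (fun a : ℝ => (g (a • z) - g 0) / a) (Set.Ioi 0) := by
  have hline : ConvexOn ℝ Set.univ fun a : ℝ => g (a • z) :=
    hg.comp_linearMap (LinearMap.toSpanSingleton ℝ E z)
  intro a ha b hb hab
  simpa using hline.secant_mono (a := 0) trivial trivial trivial (ne_of_gt ha) (ne_of_gt hb) hab

section eexp

variable {Ω : Type*} [MeasurableSpace Ω] {μ : Measure Ω}

theorem eexp_congr_ae {φ ψ : Ω → EReal} (h : φ =ᵐ[μ] ψ) : eexp μ φ = eexp μ ψ := by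
  have hpos : ∫⁻ ω, (φ ω).posPart ∂μ = ∫⁻ ω, (ψ ω).posPart ∂μ :=
    lintegral_congr_ae (h.mono fun ω hω => congrArg EReal.posPart hω)
  have hneg : ∫⁻ ω, (-φ ω).posPart ∂μ = ∫⁻ ω, (-ψ ω).posPart ∂μ :=
    lintegral_congr_ae (h.mono fun ω hω => congrArg (fun a => EReal.posPart (-a)) hω)
  rw [eexp, eexp, hpos, hneg]

theorem eexp_coe_of_integrable {h : Ω → ℝ} (hint : Integrable h μ) :
    eexp μ (fun ω => (h ω : EReal)) = (∫ ω, h ω ∂μ : ℝ) := by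
  have hpos : ∫⁻ ω, ENNReal.ofReal (h ω) ∂μ ≠ ⊤ := hint.lintegral_lt_top.ne
  have hneg : ∫⁻ ω, ENNReal.ofReal (-h ω) ∂μ ≠ ⊤ := hint.neg.lintegral_lt_top.ne
  simp_rw [eexp, ← EReal.coe_neg, EReal.posPart_coe]
  rw [if_neg hpos, integral_eq_lintegral_pos_part_sub_lintegral_neg_part hint, EReal.coe_sub,
    EReal.coe_ennreal_toReal hpos, EReal.coe_ennreal_toReal hneg]

theorem eexp_coe_add_coe_ennreal {h : Ω → ℝ} {d : Ω → ℝ≥0∞} (hint : Integrable h μ)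
    (hd : AEMeasurable d μ) :
    eexp μ (fun ω => (h ω : EReal) + d ω) = (∫ ω, h ω ∂μ : ℝ) + ↑(∫⁻ ω, d ω ∂μ) := by
  by_cases htop : ∫⁻ ω, d ω ∂μ = ⊤
  · have hpos : ∫⁻ ω, EReal.posPart (h ω + d ω) ∂μ = ⊤ := by
      have hle : ∫⁻ ω, d ω ∂μ ≤
          ∫⁻ ω, EReal.posPart (h ω + d ω) ∂μ + ∫⁻ ω, ENNReal.ofReal (-h ω) ∂μ :=
        (lintegral_mono fun ω => EReal.coe_ennreal_le_posPart_coe_add (h ω) (d ω)).trans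
          (lintegral_add_right' _ hint.aemeasurable.neg.ennreal_ofReal).le
      rw [htop, top_le_iff, ENNReal.add_eq_top] at hle
      exact hle.resolve_right hint.neg.lintegral_lt_top.ne
    rw [eexp, if_pos hpos, htop, EReal.coe_ennreal_top, EReal.coe_add_top]
  · have hfin : ∀ᵐ ω ∂μ, d ω < ⊤ := ae_lt_top' hd htop
    have hdint : Integrable (fun ω => (d ω).toReal) μ :=
      integrable_toReal_of_lintegral_ne_top hd htop
    have hae : (fun ω => (h ω : EReal) + d ω) =ᵐ[μ] fun ω => ((h ω + (d ω).toReal : ℝ) : EReal) :=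
      hfin.mono fun ω hω => by
        dsimp only
        rw [EReal.coe_add, EReal.coe_ennreal_toReal hω.ne]
    rw [eexp_congr_ae hae,
      eexp_coe_of_integrable (h := fun ω => h ω + (d ω).toReal) (hint.add hdint),
      integral_add hint hdint, integral_toReal hd hfin, EReal.coe_add,
      EReal.coe_ennreal_toReal htop]

theorem iSup_integral_eq_eexp_iSup {f : ℕ → Ω → ℝ} (hf : ∀ n, Integrable (f n) μ)
    (hmono : ∀ ω, Monotone fun n => f n ω) :
    ⨆ n, ((∫ ω, f n ω ∂μ : ℝ) : EReal) = eexp μ (fun ω => ⨆ n, (f n ω : EReal)) := by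
  have hd : ∀ n, AEMeasurable (fun ω => ENNReal.ofReal (f n ω - f 0 ω)) μ := fun n =>
    ((hf n).sub (hf 0)).aemeasurable.ennreal_ofReal
  have hd_mono : ∀ ω, Monotone fun n => ENNReal.ofReal (f n ω - f 0 ω) := fun ω _ _ hnk =>
    ENNReal.ofReal_le_ofReal (sub_le_sub_right (hmono ω hnk) _)
  have hd_lintegral : ∀ n, ∫⁻ ω, ENNReal.ofReal (f n ω - f 0 ω) ∂μ =
      ENNReal.ofReal ((∫ ω, f n ω ∂μ) - ∫ ω, f 0 ω ∂μ) := fun n => by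
    rw [← integral_sub (hf n) (hf 0), ofReal_integral_eq_lintegral_ofReal
      (f := fun ω => f n ω - f 0 ω) ((hf n).sub (hf 0))
      (ae_of_all _ fun ω => sub_nonneg.2 (hmono ω (Nat.zero_le n)))]
  have hpointwise : (fun ω => ⨆ n, (f n ω : EReal)) =
      fun ω => (f 0 ω : EReal) + ↑(⨆ n, ENNReal.ofReal (f n ω - f 0 ω)) :=
    funext fun ω => EReal.iSup_coe_eq_add_iSup_ofReal_sub fun n => hmono ω (Nat.zero_le n)
  rw [hpointwise, eexp_coe_add_coe_ennreal (hf 0) (AEMeasurable.iSup hd),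
    lintegral_iSup' hd (ae_of_all _ hd_mono), EReal.iSup_coe_eq_add_iSup_ofReal_sub fun n =>
      integral_mono (hf 0) (hf n) fun ω => hmono ω (Nat.zero_le n)]
  simp_rw [hd_lintegral]

end eexp

theorem recession_of_integral_functional_general
    {Ω : Type*} [MeasurableSpace Ω] (μ : Measure Ω) [IsProbabilityMeasure μ]
    (m : ℕ) (g : (Fin m → ℝ) → ℝ) (hgconv : ConvexOn ℝ Set.univ g)
    (U : Set (Ω → Fin m → ℝ))
    (hUsmul : ∀ u ∈ U, ∀ c : ℝ, (fun ω => c • u ω) ∈ U)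
    (hfin : ∀ u ∈ U, Integrable (fun ω => g (u ω)) μ) :
    ∀ u ∈ U,
      (⨆ α : {a : ℝ // 0 < a},
          ((((∫ ω, g (α.1 • u ω) ∂μ) - g 0) / α.1 : ℝ) : EReal)) =
        eexp μ (fun ω => gRec g (u ω)) := by
  intro u hu
  set q : ℝ → Ω → ℝ := fun a ω => (g (a • u ω) - g 0) / a
  have hq_int : ∀ a, Integrable (q a) μ := fun a =>
    ((hfin _ (hUsmul u hu a)).sub (integrable_const _)).div_const a
  have hq_mono : ∀ ω, MonotoneOn (fun a => q a ω) (Set.Ioi 0) := fun ω =>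
    hgconv.monotoneOn_slope_smul (u ω)
  have hq_integral : ∀ a : ℝ, ((∫ ω, g (a • u ω) ∂μ) - g 0) / a = ∫ ω, q a ω ∂μ := fun a => by
    rw [integral_div, integral_sub (hfin _ (hUsmul u hu a)) (integrable_const _), integral_const,
      probReal_univ, one_smul]
  have hlhs_mono : MonotoneOn (fun a => ((∫ ω, q a ω ∂μ : ℝ) : EReal)) (Set.Ioi 0) :=
    fun a ha b hb hab => EReal.coe_le_coe_iff.2
      (integral_mono (hq_int a) (hq_int b) fun ω => hq_mono ω ha hb hab)
  have hrhs : ∀ ω, gRec g (u ω) = ⨆ n : ℕ, (q (n + 1) ω : EReal) := fun ω =>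
    iSup_Ioi_eq_iSup_nat_succ (EReal.coe_strictMono.monotone.comp_monotoneOn (hq_mono ω))
  simp_rw [hq_integral, iSup_Ioi_eq_iSup_nat_succ hlhs_mono, hrhs]
  exact iSup_integral_eq_eexp_iSup (fun n => hq_int _) fun ω n k hnk =>
    hq_mono ω (by positivity : (0 : ℝ) < n + 1) (by positivity : (0 : ℝ) < k + 1) (by gcongr)

/-- For a finite convex `g` with `Eg` finite on a decomposable space `U`, the
recession function of `Eg` satisfies `(Eg)^∞(u) = E[g^∞(u)]`. -/
theorem recession_of_integral_functional
    {Ω : Type*} [MeasurableSpace Ω] (μ : Measure Ω) [IsProbabilityMeasure μ]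
    (m : ℕ) (g : (Fin m → ℝ) → ℝ) (hgconv : ConvexOn ℝ Set.univ g)
    (U : Set (Ω → Fin m → ℝ))
    (hUmeas : ∀ u ∈ U, Measurable u)
    (hU0 : (fun _ => (0 : Fin m → ℝ)) ∈ U)
    (hUsmul : ∀ u ∈ U, ∀ c : ℝ, (fun ω => c • u ω) ∈ U)
    (hUadd : ∀ u ∈ U, ∀ u' ∈ U, (fun ω => u ω + u' ω) ∈ U)
    (hUdec : ∀ (A : Set Ω), MeasurableSet A → ∀ u ∈ U, ∀ u' : Ω → Fin m → ℝ,
      Measurable u' → (∃ C : ℝ, ∀ ω i, |u' ω i| ≤ C) →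
      (fun ω => if ω ∈ A then u ω else u' ω) ∈ U)
    (hfin : ∀ u ∈ U, Integrable (fun ω => g (u ω)) μ) :
    ∀ u ∈ U,
      (⨆ α : {a : ℝ // 0 < a},
          ((((∫ ω, g (α.1 • u ω) ∂μ) - g 0) / α.1 : ℝ) : EReal)) =
        eexp μ (fun ω => gRec g (u ω)) :=
  recession_of_integral_functional_general μ m g hgconv U hUsmul hfin

end Stmt9
end

section
/- Let φ : X → (−∞,+∞] be a proper convex function attaining its infimum over a constraint in the form φ(u) = inf_{x∈N} F(x,u) for a jointly convex F, and suppose φ(ū) = F(x̄, ū) for some x̄ ∈ N. Then φ^∞(u) = sup_{α>0} inf_{x∈N} (F(x̄+αx, ū+αu) − F(x̄,ū))/α ≤ inf_{x∈N} F^∞(x,u), where F^∞ is the recession function of F. -/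
/-! Since `x̄ ∈ N`, the substitution `x ↦ x̄ + αx` is a bijection of `N`, so the difference
quotient of `φ` at `ū` is an infimum over `N` of difference quotients of `F`: the map
`y ↦ α⁻¹ (y - r)` is an order automorphism of `EReal` and hence commutes with infima.
The inequality is then `⨆ ⨅ ≤ ⨅ ⨆`. -/

namespace EReal

noncomputable def subRealOrderIso (r : ℝ) : EReal ≃o EReal :=
  Equiv.toOrderIso
    { toFun := fun x => x - r
      invFun := fun x => x + r
      left_inv := fun _ => sub_add_cancel
      right_inv := fun _ => add_sub_cancel_right }
    (fun _ _ h => sub_le_sub h le_rfl) (fun _ _ h => add_le_add h le_rfl)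

noncomputable def mulPosRealOrderIso (c : ℝ) (hc : 0 < c) : EReal ≃o EReal :=
  Equiv.toOrderIso
    { toFun := fun x => c * x
      invFun := fun x => (c⁻¹ : ℝ) * x
      left_inv := fun x => by
        dsimp only
        rw [← mul_assoc, ← coe_mul, inv_mul_cancel₀ hc.ne', coe_one, one_mul]
      right_inv := fun x => by
        dsimp only
        rw [← mul_assoc, ← coe_mul, mul_inv_cancel₀ hc.ne', coe_one, one_mul] }
    (fun _ _ h => mul_le_mul_of_nonneg_left h (EReal.coe_nonneg.2 hc.le))
    (fun _ _ h => mul_le_mul_of_nonneg_left h (EReal.coe_nonneg.2 (inv_nonneg.2 hc.le)))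

theorem coe_mul_iInf_sub_coe {ι : Sort*} {c : ℝ} (hc : 0 < c) (r : ℝ) (f : ι → EReal) :
    (c : EReal) * ((⨅ i, f i) - r) = ⨅ i, (c : EReal) * (f i - r) :=
  ((subRealOrderIso r).trans (mulPosRealOrderIso c hc)).map_iInf f

end EReal

theorem Submodule.iInf_comp_add_smul {K M α : Type*} [DivisionRing K] [AddCommGroup M]
    [Module K M] [CompleteLattice α] (p : Submodule K M) {x₀ : M} (hx₀ : x₀ ∈ p) {a : K}
    (ha : a ≠ 0) (g : M → α) :
    ⨅ x : p, g (x₀ + a • (x : M)) = ⨅ y : p, g y :=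
  ((MulAction.toPerm (Units.mk0 a ha)).trans (Equiv.addLeft (⟨x₀, hx₀⟩ : p))).iInf_comp
    (g := fun y : p => g y)

theorem recession_of_value_function_general
    {X' X : Type*} [AddCommGroup X'] [Module ℝ X'] [AddCommGroup X] [Module ℝ X]
    (N : Submodule ℝ X') (F : X' → X → EReal)
    (φ : X → EReal) (hφ : ∀ u, φ u = ⨅ x : N, F x u)
    (xb : X') (hxb : xb ∈ N) (ub : X) (r : ℝ)
    (hattain : φ ub = F xb ub) (hfin : F xb ub = (r : EReal)) (u : X) :
    (⨆ α : {a : ℝ // 0 < a},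
        (((α.1)⁻¹ : ℝ) : EReal) * (φ (ub + α.1 • u) - φ ub)) =
      (⨆ α : {a : ℝ // 0 < a}, ⨅ x : N,
        (((α.1)⁻¹ : ℝ) : EReal) * (F (xb + α.1 • x.1) (ub + α.1 • u) - F xb ub)) ∧
    (⨆ α : {a : ℝ // 0 < a},
        (((α.1)⁻¹ : ℝ) : EReal) * (φ (ub + α.1 • u) - φ ub)) ≤
      ⨅ x : N, ⨆ α : {a : ℝ // 0 < a},
        (((α.1)⁻¹ : ℝ) : EReal) * (F (xb + α.1 • x.1) (ub + α.1 • u) - F xb ub) := by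
  have quotient_eq : ∀ α : {a : ℝ // 0 < a},
      (((α.1)⁻¹ : ℝ) : EReal) * (φ (ub + α.1 • u) - φ ub) =
      ⨅ x : N, (((α.1)⁻¹ : ℝ) : EReal) * (F (xb + α.1 • x.1) (ub + α.1 • u) - F xb ub) := by
    intro α
    rw [hattain, hfin, hφ, ← N.iInf_comp_add_smul hxb α.2.ne' (F · (ub + α.1 • u)),
      EReal.coe_mul_iInf_sub_coe (inv_pos.2 α.2)]
  exact ⟨iSup_congr quotient_eq, (iSup_congr quotient_eq).trans_le (iSup_iInf_le_iInf_iSup _)⟩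

/-- If `φ(u) = inf_{x∈N} F(x,u)` for a jointly convex proper `F`, `N` a
subspace, and the infimum at `ū` is attained at `x̄ ∈ N` with `F(x̄,ū)` finite, then
`φ^∞(u) = sup_{α>0} inf_{x∈N} (F(x̄+αx, ū+αu) − F(x̄,ū))/α ≤ inf_{x∈N} F^∞(x,u)`,
where `F^∞(x,u) = sup_{α>0} (F(x̄+αx, ū+αu) − F(x̄,ū))/α`. -/
theorem recession_of_value_function
    {X' X : Type*} [AddCommGroup X'] [Module ℝ X'] [AddCommGroup X] [Module ℝ X]
    (N : Submodule ℝ X') (F : X' → X → EReal)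
    (hproper : (∀ x u, F x u ≠ ⊥) ∧ ∃ x u, F x u ≠ ⊤)
    (hconv : ∀ (x x' : X') (u u' : X) (lam : ℝ), 0 ≤ lam → lam ≤ 1 →
      F (lam • x + (1 - lam) • x') (lam • u + (1 - lam) • u') ≤
        (lam : EReal) * F x u + ((1 - lam : ℝ) : EReal) * F x' u')
    (φ : X → EReal) (hφ : ∀ u, φ u = ⨅ x : N, F x u)
    (xb : X') (hxb : xb ∈ N) (ub : X) (r : ℝ)
    (hattain : φ ub = F xb ub) (hfin : F xb ub = (r : EReal)) (u : X) :
    (⨆ α : {a : ℝ // 0 < a},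
        (((α.1)⁻¹ : ℝ) : EReal) * (φ (ub + α.1 • u) - φ ub)) =
      (⨆ α : {a : ℝ // 0 < a}, ⨅ x : N,
        (((α.1)⁻¹ : ℝ) : EReal) * (F (xb + α.1 • x.1) (ub + α.1 • u) - F xb ub)) ∧
    (⨆ α : {a : ℝ // 0 < a},
        (((α.1)⁻¹ : ℝ) : EReal) * (φ (ub + α.1 • u) - φ ub)) ≤
      ⨅ x : N, ⨆ α : {a : ℝ // 0 < a},
        (((α.1)⁻¹ : ℝ) : EReal) * (F (xb + α.1 • x.1) (ub + α.1 • u) - F xb ub) :=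
  recession_of_value_function_general N F φ hφ xb hxb ub r hattain hfin u
end
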